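/- (Appendix III computation) Let μ ∈ [0,1] and F_μ(ρ_m) := (1/2)(I − μ(m_x X + m_y Y + m_z Z)). For every m ∈ ℝ³ with ‖m‖ ≤ 1: for each i ∈ {±1}, Σ_{j,k∈{±1}} Tr[ Π↑↓_{[i,j,k]} (ρ_m ⊗ F_μ(ρ_m)) ] = (1/2)( 1 + ((1+μ)/2)·i·m_x ); for each j ∈ {±1}, Σ_{i,k∈{±1}} Tr[ Π↑↓_{[i,j,k]} (ρ_m ⊗ F_μ(ρ_m)) ] = (1/2)( 1 + ((1+μ)/2)·j·m_y ); and for each k ∈ {±1}, Σ_{i,j∈{±1}} Tr[ Π↑↓_{[i,j,k]} (ρ_m ⊗ F_μ(ρ_m)) ] = (1/2)( 1 + ((1+μ)/2)·k·m_z ). -/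

import Mathlib

open Matrix Complex
open scoped Kronecker Matrix ComplexOrder

noncomputable section

/-- Pauli matrix σ_x. -/
def σx : Matrix (Fin 2) (Fin 2) ℂ := !![0, 1; 1, 0]
/-- Pauli matrix σ_y. -/
def σy : Matrix (Fin 2) (Fin 2) ℂ := !![0, -Complex.I; Complex.I, 0]
/-- Pauli matrix σ_z. -/
def σz : Matrix (Fin 2) (Fin 2) ℂ := !![1, 0; 0, -1]

/-- The two-element set {+1, -1} of outcomes/signs. -/
def pm : Finset ℝ := {1, -1}

/-- Qubit state with Bloch vector m: ρ_m = (1/2)(I + m·σ). -/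
def rho (m : Fin 3 → ℝ) : Matrix (Fin 2) (Fin 2) ℂ :=
  (2 : ℂ)⁻¹ • ((1 : Matrix (Fin 2) (Fin 2) ℂ) + (m 0 : ℂ) • σx + (m 1 : ℂ) • σy + (m 2 : ℂ) • σz)

/-- The antiparallel-configuration effects Π↑↓_{[i,j,k]}. -/
def PiAnti (i j k : ℝ) : Matrix (Fin 2 × Fin 2) (Fin 2 × Fin 2) ℂ :=
  (16 : ℂ)⁻¹ • ((2 : ℂ) • (1 : Matrix (Fin 2 × Fin 2) (Fin 2 × Fin 2) ℂ)
    + (i : ℂ) • (σx ⊗ₖ (1 : Matrix (Fin 2) (Fin 2) ℂ) - (1 : Matrix (Fin 2) (Fin 2) ℂ) ⊗ₖ σx)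
    + (j : ℂ) • (σy ⊗ₖ (1 : Matrix (Fin 2) (Fin 2) ℂ) - (1 : Matrix (Fin 2) (Fin 2) ℂ) ⊗ₖ σy)
    + (k : ℂ) • (σz ⊗ₖ (1 : Matrix (Fin 2) (Fin 2) ℂ) - (1 : Matrix (Fin 2) (Fin 2) ℂ) ⊗ₖ σz)
    - ((i * j : ℝ) : ℂ) • (σx ⊗ₖ σy + σy ⊗ₖ σx)
    - ((j * k : ℝ) : ℂ) • (σy ⊗ₖ σz + σz ⊗ₖ σy)
    - ((k * i : ℝ) : ℂ) • (σz ⊗ₖ σx + σx ⊗ₖ σz))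

/-- The GPT effects Π#_{[i,j,k]}. -/
def PiSharp (i j k : ℝ) : Matrix (Fin 2 × Fin 2) (Fin 2 × Fin 2) ℂ :=
  (16 : ℂ)⁻¹ • ((2 : ℂ) • (1 : Matrix (Fin 2 × Fin 2) (Fin 2 × Fin 2) ℂ)
    + (i : ℂ) • (σx ⊗ₖ (1 : Matrix (Fin 2) (Fin 2) ℂ) + (1 : Matrix (Fin 2) (Fin 2) ℂ) ⊗ₖ σx)
    + (j : ℂ) • (σy ⊗ₖ (1 : Matrix (Fin 2) (Fin 2) ℂ) + (1 : Matrix (Fin 2) (Fin 2) ℂ) ⊗ₖ σy)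
    + (k : ℂ) • (σz ⊗ₖ (1 : Matrix (Fin 2) (Fin 2) ℂ) + (1 : Matrix (Fin 2) (Fin 2) ℂ) ⊗ₖ σz)
    + ((i * j : ℝ) : ℂ) • (σx ⊗ₖ σy + σy ⊗ₖ σx)
    + ((j * k : ℝ) : ℂ) • (σy ⊗ₖ σz + σz ⊗ₖ σy)
    + ((k * i : ℝ) : ℂ) • (σz ⊗ₖ σx + σx ⊗ₖ σz))

end

noncomputable section

/-- The parallel-configuration effects Π↑↑_{[i,j,k]} of Carmeli et al. -/
def PiPar (i j k : ℝ) : Matrix (Fin 2 × Fin 2) (Fin 2 × Fin 2) ℂ :=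
  (32 : ℂ)⁻¹ • ((4 : ℂ) • (1 : Matrix (Fin 2 × Fin 2) (Fin 2 × Fin 2) ℂ)
    + ((Real.sqrt 3 * i : ℝ) : ℂ) • (σx ⊗ₖ (1 : Matrix (Fin 2) (Fin 2) ℂ) + (1 : Matrix (Fin 2) (Fin 2) ℂ) ⊗ₖ σx)
    + ((Real.sqrt 3 * j : ℝ) : ℂ) • (σy ⊗ₖ (1 : Matrix (Fin 2) (Fin 2) ℂ) + (1 : Matrix (Fin 2) (Fin 2) ℂ) ⊗ₖ σy)
    + ((Real.sqrt 3 * k : ℝ) : ℂ) • (σz ⊗ₖ (1 : Matrix (Fin 2) (Fin 2) ℂ) + (1 : Matrix (Fin 2) (Fin 2) ℂ) ⊗ₖ σz)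
    + ((i * j : ℝ) : ℂ) • (σx ⊗ₖ σy + σy ⊗ₖ σx)
    + ((j * k : ℝ) : ℂ) • (σy ⊗ₖ σz + σz ⊗ₖ σy)
    + ((k * i : ℝ) : ℂ) • (σz ⊗ₖ σx + σx ⊗ₖ σz))

/-- The universal spin-flip (transformation) map F(A) = (Tr A)·I − A. -/
def Flip (A : Matrix (Fin 2) (Fin 2) ℂ) : Matrix (Fin 2) (Fin 2) ℂ :=
  A.trace • (1 : Matrix (Fin 2) (Fin 2) ℂ) - A

/-- The map id ⊗ Φ on M₂(ℂ) ⊗ M₂(ℂ), acting as A ⊗ B ↦ A ⊗ Φ(B) extended linearly. -/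
def idTensor (Φ : Matrix (Fin 2) (Fin 2) ℂ → Matrix (Fin 2) (Fin 2) ℂ)
    (M : Matrix (Fin 2 × Fin 2) (Fin 2 × Fin 2) ℂ) : Matrix (Fin 2 × Fin 2) (Fin 2 × Fin 2) ℂ :=
  Matrix.of fun p q => Φ (Matrix.of fun b d => M (p.1, b) (q.1, d)) p.2 q.2

/-- Choi matrix Σ_{k,l} E_{kl} ⊗ Λ(E_{kl}) of a linear map Λ on M₂(ℂ). -/
def Choi (Λ : Matrix (Fin 2) (Fin 2) ℂ →ₗ[ℂ] Matrix (Fin 2) (Fin 2) ℂ) :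
    Matrix (Fin 2 × Fin 2) (Fin 2 × Fin 2) ℂ :=
  ∑ k : Fin 2, ∑ l : Fin 2,
    (Matrix.single k l (1 : ℂ)) ⊗ₖ Λ (Matrix.single k l (1 : ℂ))

/-- Sign value of a Boolean outcome: true ↦ +1, false ↦ −1. -/
def sgn (b : Bool) : ℝ := if b then 1 else -1

/-- Unsharp spin effect P^a_{n̂,λ} = (1/2)(I + λ a n̂·σ). -/
def Peff (n : Fin 3 → ℝ) (lam a : ℝ) : Matrix (Fin 2) (Fin 2) ℂ :=
  (2 : ℂ)⁻¹ • ((1 : Matrix (Fin 2) (Fin 2) ℂ)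
    + ((lam * a * n 0 : ℝ) : ℂ) • σx + ((lam * a * n 1 : ℝ) : ℂ) • σy
    + ((lam * a * n 2 : ℝ) : ℂ) • σz)

/-- Computational basis vector |ab⟩ of ℂ²⊗ℂ². -/
def ket (a b : Fin 2) : Fin 2 × Fin 2 → ℂ := fun p => if p = (a, b) then 1 else 0

/-- Bell vector |φ⁺⟩. -/
def phiP : Fin 2 × Fin 2 → ℂ := ((Real.sqrt 2 : ℝ) : ℂ)⁻¹ • (ket 0 0 + ket 1 1)
/-- Bell vector |φ⁻⟩. -/
def phiM : Fin 2 × Fin 2 → ℂ := ((Real.sqrt 2 : ℝ) : ℂ)⁻¹ • (ket 0 0 - ket 1 1)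
/-- Bell vector |ψ⁺⟩. -/
def psiP : Fin 2 × Fin 2 → ℂ := ((Real.sqrt 2 : ℝ) : ℂ)⁻¹ • (ket 0 1 + ket 1 0)
/-- Bell vector |ψ⁻⟩. -/
def psiM : Fin 2 × Fin 2 → ℂ := ((Real.sqrt 2 : ℝ) : ℂ)⁻¹ • (ket 0 1 - ket 1 0)

/-- The vector |ξ_{[i,j,k]}⟩ = (1/2)(|ψ⁻⟩ − i|φ⁻⟩ + 𝐢 j|φ⁺⟩ + k|ψ⁺⟩). -/
def xi (i j k : ℝ) : Fin 2 × Fin 2 → ℂ :=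
  (2 : ℂ)⁻¹ • (psiM - (i : ℂ) • phiM + (Complex.I * (j : ℂ)) • phiP + (k : ℂ) • psiP)

end

/-
Tr[(A ⊗ B)(ρ_m ⊗ ρ_n)] = Tr[A ρ_m] Tr[B ρ_n], and Tr[σ_a ρ_m] = m_a, so the trace of
Π↑↓_{[i,j,k]} on ρ_m ⊗ ρ_n is a polynomial in i, j, k. Summing two of the signs over {±1}
kills every term that is odd in one of them, leaving (1/2)(1 + i (m_x − n_x)/2) for the
x-marginal, and F_μ(ρ_m) = ρ_{−μm} gives m_x − n_x = (1 + μ) m_x.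
-/

lemma sum_pm {M : Type*} [AddCommMonoid M] (f : ℝ → M) : ∑ x ∈ pm, f x = f 1 + f (-1) :=
  Finset.sum_pair (by norm_num)

lemma trace_rho (n : Fin 3 → ℝ) : (rho n).trace = 1 := by
  simp [rho, Matrix.trace, Matrix.diag, Fin.sum_univ_two, σx, σy, σz]
  ring

lemma trace_σx_mul_rho (n : Fin 3 → ℝ) : (σx * rho n).trace = n 0 := by
  simp [rho, Matrix.trace, Matrix.diag, Matrix.mul_apply, Fin.sum_univ_two, σx, σy, σz,
    Matrix.one_apply]
  ring

lemma trace_σy_mul_rho (n : Fin 3 → ℝ) : (σy * rho n).trace = n 1 := by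
  simp [rho, Matrix.trace, Matrix.diag, Matrix.mul_apply, Fin.sum_univ_two, σx, σy, σz,
    Matrix.one_apply]
  linear_combination (-(n 1 : ℂ)) * Complex.I_sq

lemma trace_σz_mul_rho (n : Fin 3 → ℝ) : (σz * rho n).trace = n 2 := by
  simp [rho, Matrix.trace, Matrix.diag, Matrix.mul_apply, Fin.sum_univ_two, σx, σy, σz,
    Matrix.one_apply]
  ring

lemma trace_kronecker_mul_kronecker {R ι κ : Type*} [CommSemiring R] [Fintype ι] [Fintype κ]
    (A C : Matrix ι ι R) (B D : Matrix κ κ R) :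
    ((A ⊗ₖ B) * (C ⊗ₖ D)).trace = (A * C).trace * (B * D).trace := by
  rw [← mul_kronecker_mul, trace_kronecker]

lemma trace_piAnti_mul_rho_kronecker_rho (i j k : ℝ) (m n : Fin 3 → ℝ) :
    (PiAnti i j k * (rho m ⊗ₖ rho n)).trace
      = ((16⁻¹ * (2 + i * (m 0 - n 0) + j * (m 1 - n 1) + k * (m 2 - n 2)
          - i * j * (m 0 * n 1 + m 1 * n 0) - j * k * (m 1 * n 2 + m 2 * n 1)
          - k * i * (m 2 * n 0 + m 0 * n 2)) : ℝ) : ℂ) := by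
  simp only [PiAnti, smul_mul, add_mul, sub_mul, trace_smul, trace_add, trace_sub,
    trace_kronecker_mul_kronecker, one_mul, trace_kronecker, trace_rho, trace_σx_mul_rho,
    trace_σy_mul_rho, trace_σz_mul_rho, smul_eq_mul]
  push_cast
  ring

lemma sum_trace_piAnti_mul_rho_kronecker_rho_x (i : ℝ) (m n : Fin 3 → ℝ) :
    ∑ j ∈ pm, ∑ k ∈ pm, (PiAnti i j k * (rho m ⊗ₖ rho n)).trace
      = ((1 / 2 * (1 + i * (m 0 - n 0) / 2) : ℝ) : ℂ) := by
  simp only [sum_pm, trace_piAnti_mul_rho_kronecker_rho]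
  push_cast
  ring

lemma sum_trace_piAnti_mul_rho_kronecker_rho_y (j : ℝ) (m n : Fin 3 → ℝ) :
    ∑ i ∈ pm, ∑ k ∈ pm, (PiAnti i j k * (rho m ⊗ₖ rho n)).trace
      = ((1 / 2 * (1 + j * (m 1 - n 1) / 2) : ℝ) : ℂ) := by
  simp only [sum_pm, trace_piAnti_mul_rho_kronecker_rho]
  push_cast
  ring

lemma sum_trace_piAnti_mul_rho_kronecker_rho_z (k : ℝ) (m n : Fin 3 → ℝ) :
    ∑ i ∈ pm, ∑ j ∈ pm, (PiAnti i j k * (rho m ⊗ₖ rho n)).trace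
      = ((1 / 2 * (1 + k * (m 2 - n 2) / 2) : ℝ) : ℂ) := by
  simp only [sum_pm, trace_piAnti_mul_rho_kronecker_rho]
  push_cast
  ring

theorem piAnti_marginals_Fmu_general (μ : ℝ) (m : Fin 3 → ℝ) :
    (∀ i ∈ pm, ∑ j ∈ pm, ∑ k ∈ pm, (PiAnti i j k * (rho m ⊗ₖ rho (-(μ • m)))).trace
        = ((1 / 2 * (1 + (1 + μ) / 2 * i * m 0) : ℝ) : ℂ)) ∧
    (∀ j ∈ pm, ∑ i ∈ pm, ∑ k ∈ pm, (PiAnti i j k * (rho m ⊗ₖ rho (-(μ • m)))).trace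
        = ((1 / 2 * (1 + (1 + μ) / 2 * j * m 1) : ℝ) : ℂ)) ∧
    (∀ k ∈ pm, ∑ i ∈ pm, ∑ j ∈ pm, (PiAnti i j k * (rho m ⊗ₖ rho (-(μ • m)))).trace
        = ((1 / 2 * (1 + (1 + μ) / 2 * k * m 2) : ℝ) : ℂ)) := by
  refine ⟨fun i _ => ?_, fun j _ => ?_, fun k _ => ?_⟩ <;>
    simp only [sum_trace_piAnti_mul_rho_kronecker_rho_x, sum_trace_piAnti_mul_rho_kronecker_rho_y,
      sum_trace_piAnti_mul_rho_kronecker_rho_z, Pi.neg_apply, Pi.smul_apply, smul_eq_mul] <;>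
    congr 1 <;> ring

/-- Appendix III: marginals of Π↑↓ on ρ_m ⊗ F_μ(ρ_m) give the
statistics of the unsharp observables with sharpness (1+μ)/2, where
F_μ(ρ_m) = (1/2)(I − μ m·σ) = ρ_{−μm}. -/
theorem piAnti_marginals_Fmu (μ : ℝ) (hμ : μ ∈ Set.Icc (0 : ℝ) 1)
    (m : Fin 3 → ℝ) (hm : m 0 ^ 2 + m 1 ^ 2 + m 2 ^ 2 ≤ 1) :
    (∀ i ∈ pm, ∑ j ∈ pm, ∑ k ∈ pm, (PiAnti i j k * (rho m ⊗ₖ rho (-(μ • m)))).trace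
        = ((1 / 2 * (1 + (1 + μ) / 2 * i * m 0) : ℝ) : ℂ)) ∧
    (∀ j ∈ pm, ∑ i ∈ pm, ∑ k ∈ pm, (PiAnti i j k * (rho m ⊗ₖ rho (-(μ • m)))).trace
        = ((1 / 2 * (1 + (1 + μ) / 2 * j * m 1) : ℝ) : ℂ)) ∧
    (∀ k ∈ pm, ∑ i ∈ pm, ∑ j ∈ pm, (PiAnti i j k * (rho m ⊗ₖ rho (-(μ • m)))).trace
        = ((1 / 2 * (1 + (1 + μ) / 2 * k * m 2) : ℝ) : ℂ)) :=
  piAnti_marginals_Fmu_general μ m
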